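/- arXiv:1804.04024 — 2 statements merged into one kernel-verified Lean document; each statement's English description precedes it below -/
import Mathlib

section
/- Morley's theorem: In any triangle, the three points of intersection of adjacent angle trisectors form an equilateral triangle. Precisely, if triangle ABC has angles 3a, 3b, 3c with a + b + c = π/3, and P is the intersection of the trisectors of angles B and C nearest side BC (similarly Q for C, A and R for A, B), then PQR is equilateral. -/
/-!
Scale the triangle so that `BC = u sin 3a`, `CA = u sin 3b`, `AB = u sin 3c` (law of sines).
By the identity `sin 3t = 4 sin t sin (π/3 + t) sin (π/3 - t)` and the law of sines in the small
triangles on the sides, `BP = 4u sin a sin c sin (π/3 + a)` and `BR = 4u sin a sin c sin (π/3 + c)`.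
The trisectors `BP`, `BR` enclose the angle `b`, and `(π/3 + a) + (π/3 + c) + b = π`, so `PBR` is a
triangle with sides proportional to the sines of its angles and the law of cosines gives
`PR = 4u sin a sin b sin c`. This expression is symmetric in `a, b, c`.
-/

open EuclideanGeometry Real Module

theorem Real.sin_three_mul_eq_four_mul_sin_mul_sin_mul_sin (t : ℝ) :
    sin (3 * t) = 4 * sin t * sin (π / 3 + t) * sin (π / 3 - t) := by
  rw [sin_three_mul, sin_add, sin_sub, sin_pi_div_three, cos_pi_div_three]
  have h3 : √3 ^ 2 = 3 := sq_sqrt (by norm_num)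
  linear_combination (-(3 * sin t)) * sin_sq_add_cos_sq t - sin t * cos t ^ 2 * h3

theorem Real.sin_sq_add_sin_sq_sub_two_mul_sin_mul_sin_mul_cos {x y z : ℝ} (h : x + y + z = π) :
    sin x ^ 2 + sin y ^ 2 - 2 * sin x * sin y * cos z = sin z ^ 2 := by
  rw [show z = π - (x + y) by linarith, cos_pi_sub, sin_pi_sub, sin_add, cos_add]
  linear_combination (-(sin x ^ 2)) * sin_sq_add_cos_sq y - sin y ^ 2 * sin_sq_add_cos_sq x

namespace EuclideanGeometry

variable {V Pt : Type*} [NormedAddCommGroup V] [InnerProductSpace ℝ V] [MetricSpace Pt]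
  [NormedAddTorsor V Pt]

theorem dist_mul_sin_angle_add_angle (p b c : Pt) :
    dist b p * sin (∠ p b c + ∠ p c b) = dist b c * sin (∠ p c b) := by
  rcases eq_or_ne p b with rfl | hpb
  · rcases eq_or_ne p c with rfl | hpc
    · simp
    · simp [angle_self_of_ne hpc]
  have hsum := angle_add_angle_add_angle_eq_pi c hpb
  rw [show ∠ p b c + ∠ p c b = π - ∠ c p b by
      linarith [angle_comm c b p, angle_comm b p c], sin_pi_sub, dist_comm b p, mul_comm,
    sin_angle_mul_dist_eq_sin_angle_mul_dist c p b, angle_comm, mul_comm]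

theorem dist_eq_mul_sin_of_dist_eq_mul_sin {p b r : Pt} {k x y : ℝ} (hk : 0 ≤ k)
    (hp : dist b p = k * sin x) (hr : dist b r = k * sin y) (hxyz : x + y + ∠ p b r = π) :
    dist p r = k * sin (∠ p b r) := by
  have hcos := law_cos p b r
  rw [dist_comm p b, dist_comm r b, hp, hr] at hcos
  have hsin := sin_sq_add_sin_sq_sub_two_mul_sin_mul_sin_mul_cos hxyz
  refine (sq_eq_sq₀ dist_nonneg (mul_nonneg hk (sin_nonneg_of_nonneg_of_le_pi
    (angle_nonneg _ _ _) (angle_le_pi _ _ _)))).1 ?_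
  linear_combination hcos + k ^ 2 * hsin

attribute [local instance] FiniteDimensional.of_fact_finrank_eq_two

theorem angle_eq_sub_sub_of_sSameSide [Fact (finrank ℝ V = 2)] {v w₁ w₂ p₁ p₂ : Pt}
    (hncol : ¬Collinear ℝ {w₁, v, w₂})
    (hp₁ : (affineSpan ℝ {v, w₁}).SSameSide p₁ w₂)
    (hp₂ : (affineSpan ℝ {v, w₂}).SSameSide p₂ w₁)
    (hle : ∠ p₁ v w₁ + ∠ p₂ v w₂ ≤ ∠ w₁ v w₂) :
    ∠ p₁ v p₂ = ∠ w₁ v w₂ - ∠ p₁ v w₁ - ∠ p₂ v w₂ := by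
  have : Module.Oriented ℝ V (Fin 2) := ⟨(finBasisOfFinrankEq ℝ V Fact.out).orientation⟩
  -- Orient the plane so that `∡ w₁ v w₂` is positive; the same-side hypotheses then make
  -- `∡ w₁ v p₁` and `∡ p₂ v w₂` positive as well, and oriented angles at `v` add up.
  wlog hpos : (∡ w₁ v w₂).sign = 1 generalizing w₁ w₂ p₁ p₂
  · have hneg : (∡ w₂ v w₁).sign = 1 := by
      have h0 : (∡ w₁ v w₂).sign ≠ 0 := by rwa [Ne, oangle_sign_eq_zero_iff_collinear]
      rw [oangle_rev, Real.Angle.sign_neg]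
      cases h : (∡ w₁ v w₂).sign <;> simp_all
    have := this (by rwa [Set.pair_comm, Set.insert_comm, Set.pair_comm]) hp₂ hp₁
      (by rwa [add_comm, angle_comm w₂]) hneg
    rw [angle_comm, this, angle_comm w₂]
    ring
  have hv₁ : w₁ ≠ v := ne₁₂_of_not_collinear hncol
  have hv₂ : w₂ ≠ v := (ne₂₃_of_not_collinear hncol).symm
  have hpv₁ : p₁ ≠ v := fun h => hp₁.2.1 (h ▸ left_mem_affineSpan_pair ℝ v w₁)
  have hpv₂ : p₂ ≠ v := fun h => hp₂.2.1 (h ▸ left_mem_affineSpan_pair ℝ v w₂)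
  have hsign₁ : (∡ w₁ v p₁).sign = 1 := by
    have e := hp₁.oangle_sign_eq (left_mem_affineSpan_pair ℝ v w₁)
      (right_mem_affineSpan_pair ℝ v w₁)
    rw [oangle_rotate_sign p₁, oangle_rotate_sign v, ← e, oangle_rotate_sign w₁, hpos]
  have hsign₂ : (∡ p₂ v w₂).sign = 1 := by
    have e := hp₂.oangle_sign_eq (left_mem_affineSpan_pair ℝ v w₂)
      (right_mem_affineSpan_pair ℝ v w₂)
    rw [oangle_rev, Real.Angle.sign_neg, oangle_rotate_sign p₂, oangle_rotate_sign v, ← e,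
      oangle_rotate_sign w₂, oangle_rev, Real.Angle.sign_neg, hpos]
    rfl
  have hsum : ∡ p₁ v p₂ = ((∠ w₁ v w₂ - ∠ p₁ v w₁ - ∠ p₂ v w₂ : ℝ) : Real.Angle) := by
    rw [← oangle_add hpv₁ hv₂ hpv₂, ← oangle_add hpv₁ hv₁ hv₂, oangle_rev w₁ v p₁,
      oangle_rev p₂ v w₂, oangle_eq_angle_of_sign_eq_one hsign₁,
      oangle_eq_angle_of_sign_eq_one hpos, oangle_eq_angle_of_sign_eq_one hsign₂,
      angle_comm w₁ v p₁, Real.Angle.coe_sub, Real.Angle.coe_sub]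
    abel
  rw [angle_eq_abs_oangle_toReal hpv₁ hpv₂, hsum, Real.Angle.toReal_coe_eq_self_iff.2,
    abs_of_nonneg]
  · linarith
  · constructor <;>
      linarith [pi_pos, angle_le_pi w₁ v w₂, angle_nonneg p₁ v w₁, angle_nonneg p₂ v w₂]

theorem dist_eq_mul_sin_mul_sin_mul_sin_pi_div_three_add {p x y : Pt} {a b c u : ℝ}
    (habc : a + b + c = π / 3) (hbc : sin (b + c) ≠ 0) (hxy : dist x y = u * sin (3 * a))
    (hb : ∠ p x y = b) (hc : ∠ p y x = c) :
    dist x p = 4 * u * sin a * sin c * sin (π / 3 + a) := by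
  have h := dist_mul_sin_angle_add_angle p x y
  rw [hb, hc, hxy, sin_three_mul_eq_four_mul_sin_mul_sin_mul_sin,
    show π / 3 - a = b + c by linarith] at h
  exact mul_right_cancel₀ hbc (by linear_combination h)

theorem dist_eq_four_mul_sin_mul_sin_mul_sin_of_trisectors [Fact (finrank ℝ V = 2)]
    {A B C P R : Pt} {a b c u : ℝ} (ha : 0 < a) (hb : 0 < b) (hc : 0 < c)
    (habc : a + b + c = π / 3) (hu : 0 ≤ u) (hncol : ¬Collinear ℝ {C, B, A})
    (hBC : dist B C = u * sin (3 * a)) (hBA : dist B A = u * sin (3 * c))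
    (hB : ∠ C B A = 3 * b)
    (hP₁ : ∠ P B C = b) (hP₂ : ∠ P C B = c) (hP : (affineSpan ℝ {B, C}).SSameSide P A)
    (hR₁ : ∠ R B A = b) (hR₂ : ∠ R A B = a) (hR : (affineSpan ℝ {B, A}).SSameSide R C) :
    dist P R = 4 * u * sin a * sin b * sin c := by
  have hsin : ∀ t, 0 < t → t < π → 0 < sin t := fun _ => sin_pos_of_pos_of_lt_pi
  have hBP := dist_eq_mul_sin_mul_sin_mul_sin_pi_div_three_add habc
    (hsin _ (by linarith) (by linarith [pi_pos])).ne' hBC hP₁ hP₂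
  have hBR := dist_eq_mul_sin_mul_sin_mul_sin_pi_div_three_add (a := c) (by linarith)
    (hsin _ (by linarith) (by linarith [pi_pos])).ne' hBA hR₁ hR₂
  have hk : 0 ≤ 4 * u * sin a * sin c := by
    have := hsin a ha (by linarith [pi_pos])
    have := hsin c hc (by linarith [pi_pos])
    positivity
  have hPBR : ∠ P B R = b := by
    rw [angle_eq_sub_sub_of_sSameSide hncol hP hR (by linarith), hB, hP₁, hR₁]
    ring
  rw [dist_eq_mul_sin_of_dist_eq_mul_sin (x := π / 3 + a) (y := π / 3 + c) hk hBP
    (by rw [hBR]; ring) (by linarith), hPBR]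
  ring

end EuclideanGeometry

theorem morley (A B C P Q R : EuclideanSpace ℝ (Fin 2))
    (hABC : AffineIndependent ℝ ![A, B, C])
    (a b c : ℝ) (ha : 0 < a) (hb : 0 < b) (hc : 0 < c)
    (habc : a + b + c = Real.pi / 3)
    (hA : ∠ B A C = 3 * a) (hB : ∠ C B A = 3 * b) (hC : ∠ A C B = 3 * c)
    (hP₁ : ∠ P B C = b) (hP₂ : ∠ P C B = c)
    (hPside : AffineSubspace.SSameSide (affineSpan ℝ {B, C}) P A)
    (hQ₁ : ∠ Q C A = c) (hQ₂ : ∠ Q A C = a)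
    (hQside : AffineSubspace.SSameSide (affineSpan ℝ {C, A}) Q B)
    (hR₁ : ∠ R A B = a) (hR₂ : ∠ R B A = b)
    (hRside : AffineSubspace.SSameSide (affineSpan ℝ {A, B}) R C) :
    dist P Q = dist Q R ∧ dist Q R = dist R P := by
  have : Fact (finrank ℝ (EuclideanSpace ℝ (Fin 2)) = 2) := ⟨finrank_euclideanSpace_fin⟩
  have hncol : ¬Collinear ℝ {A, B, C} := affineIndependent_iff_not_collinear_set.1 hABC
  have hsinA : 0 < sin (3 * a) := sin_pos_of_pos_of_lt_pi (by linarith) (by linarith [pi_pos])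
  set u := dist B C / sin (3 * a)
  have hu : 0 ≤ u := div_nonneg dist_nonneg hsinA.le
  have hBC : dist B C = u * sin (3 * a) := (div_mul_cancel₀ _ hsinA.ne').symm
  have hsinB : 0 < sin (3 * b) := sin_pos_of_pos_of_lt_pi (by linarith) (by linarith [pi_pos])
  have hCA : dist C A = u * sin (3 * b) := by
    have h := law_sin A B C
    rw [angle_comm A B C, hB, angle_comm C A B, hA, hBC] at h
    exact mul_left_cancel₀ hsinA.ne' (by linear_combination -h)
  have hAB : dist A B = u * sin (3 * c) := by
    have h := law_sin B C A
    rw [angle_comm B C A, hC, angle_comm A B C, hB, hCA] at h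
    exact mul_left_cancel₀ hsinB.ne' (by linear_combination -h)
  have hPR := dist_eq_four_mul_sin_mul_sin_mul_sin_of_trisectors ha hb hc habc hu
    (by rwa [Set.insert_comm A B, Set.pair_comm A C, Set.insert_comm B C] at hncol) hBC
    (by rwa [dist_comm]) hB hP₁ hP₂ hPside hR₂ hR₁ (by rwa [Set.pair_comm])
  have hQP := dist_eq_four_mul_sin_mul_sin_mul_sin_of_trisectors hb hc ha (by linarith) hu
    (by rwa [Set.pair_comm B C] at hncol) hCA (by rwa [dist_comm]) hC hQ₁ hQ₂ hQside hP₂ hP₁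
    (by rwa [Set.pair_comm])
  have hRQ := dist_eq_four_mul_sin_mul_sin_mul_sin_of_trisectors hc ha hb (by linarith) hu
    (by rwa [Set.insert_comm A B] at hncol) hAB (by rwa [dist_comm]) hA hR₁ hR₂ hRside hQ₂ hQ₁
    (by rwa [Set.pair_comm])
  rw [dist_comm P Q, hQP, dist_comm Q R, hRQ, dist_comm R P, hPR]
  constructor <;> ring
end

section
/- Suppose c_1, …, c_n are positive reals with c_1 + ⋯ + c_n = 2π, and a_1, …, a_n, b_1, …, b_n are positive reals such that the multiset of a's equals the multiset of b's, and each triple (a_i, b_i, c_i) satisfies a_i + b_i + c_i = π. Then the closed composition of spiral similarities ρ_1 ∘ ⋯ ∘ ρ_n is the identity, where ρ_i is rotation by c_i about the origin composed with scaling by sin(a_i)/sin(b_i). -/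
open Finset

theorem Finset.prod_univ_comp_eq_of_map_eq {ι α M : Type*} [Fintype ι] [CommMonoid M]
    {f g : ι → α} (hfg : univ.val.map f = univ.val.map g) (h : α → M) :
    ∏ i, h (f i) = ∏ i, h (g i) := by
  simpa only [prod_eq_multiset_prod, Multiset.map_map, Function.comp_def] using
    congrArg (fun s => (s.map h).prod) hfg

theorem Finset.prod_univ_div_comp_eq_one_of_map_eq {ι α K : Type*} [Fintype ι] [Field K]
    {f g : ι → α} (hfg : univ.val.map f = univ.val.map g) (h : α → K)
    (hg : ∀ i, h (g i) ≠ 0) :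
    ∏ i, h (f i) / h (g i) = 1 := by
  rw [prod_div_distrib, prod_univ_comp_eq_of_map_eq hfg h]
  exact div_self (prod_ne_zero_iff.2 fun i _ => hg i)

theorem Complex.prod_exp_I_mul_eq_one {ι : Type*} [Fintype ι] (c : ι → ℝ) (k : ℤ)
    (hc : ∑ i, c i = 2 * Real.pi * k) :
    ∏ i, Complex.exp (Complex.I * c i) = 1 := by
  rw [← Complex.exp_sum, ← mul_sum, ← Complex.ofReal_sum, hc, Complex.exp_eq_one_iff]
  exact ⟨k, by push_cast; ring⟩

theorem ez_holonomy_spiral (n : ℕ) (a b c : Fin n → ℝ)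
    (hapos : ∀ i, 0 < a i) (hbpos : ∀ i, 0 < b i) (hcpos : ∀ i, 0 < c i)
    (hcsum : ∑ i, c i = 2 * Real.pi)
    (hperm : (Finset.univ.val.map a) = (Finset.univ.val.map b))
    (htri : ∀ i, a i + b i + c i = Real.pi) :
    ∏ i, ((Real.sin (a i) / Real.sin (b i) : ℂ) * Complex.exp (Complex.I * c i)) = 1 := by
  have hsin_b : ∀ i, (Real.sin (b i) : ℂ) ≠ 0 := fun i =>
    Complex.ofReal_ne_zero.2 (Real.sin_pos_of_pos_of_lt_pi (hbpos i)
      (by linarith [htri i, hapos i, hcpos i])).ne'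
  have hratio : ∏ i, (Real.sin (a i) / Real.sin (b i) : ℂ) = 1 :=
    prod_univ_div_comp_eq_one_of_map_eq hperm (fun x => (Real.sin x : ℂ)) hsin_b
  have hrot : ∏ i, Complex.exp (Complex.I * c i) = 1 :=
    Complex.prod_exp_I_mul_eq_one c 1 (by rw [hcsum]; simp)
  rw [prod_mul_distrib, hratio, hrot, one_mul]
end
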